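/- arXiv:1608.01285 — 4 statements merged into one kernel-verified Lean document; each statement's English description precedes it below -/
import Mathlib

section
/- For every α > 0, there exists δ ∈ (0, 1/4) and p̄ > 0 such that for all p0 ∈ (0, p̄), all η ∈ [0, 2α], and all x1 ∈ (0, 2δ]: (2α)² · ∫₁^∞ σ^(1−p0) / (σ²·(σ² + η²)) dσ < ∫₁^(1/(2δ)) σ^(1−p0) · α²(σ−1)² / ((σ² + α²)·(σ² + α²σ²)) dσ. -/
/-!
Since `σ^(1-p0) ≤ σ` and `σ²(σ² + η²) ≥ σ⁴` on `(1, ∞)`, the left side is at most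
`(2α)² ∫₁^∞ σ⁻³ dσ = 2α²`, whatever `p0 ≥ 0` and `η`. On the right, for `σ ≥ 1` the denominator is at
most `(1 + α²)² σ⁴`, and on `[1, M]` the factor `σ^(-p0)` is at least `1/2` as soon as `M^p0 ≤ 2`.
As `(σ - 1)²/σ³ ≥ 1/σ - 2/σ²`, the right side is then at least `α²/(2(1 + α²)²) · (log M - 2)`.
Taking `log M = 3 + 4(1 + α²)²`, `δ = 1/(2M)` and `p̄ = log 2 / log M` makes this exceed `2α²`.
-/

open Set MeasureTheory Real

namespace BarrierCrossing

lemma rpow_one_sub_div_le_rpow_neg_three {σ p η : ℝ} (hσ : 1 ≤ σ) (hp : 0 ≤ p) :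
    σ ^ (1 - p) / (σ ^ 2 * (σ ^ 2 + η ^ 2)) ≤ σ ^ (-3 : ℝ) := by
  have hσ0 : 0 < σ := by linarith
  have hnum : σ ^ (1 - p) ≤ σ := by
    simpa using rpow_le_rpow_of_exponent_le hσ (by linarith : 1 - p ≤ 1)
  have hden : σ ^ 4 ≤ σ ^ 2 * (σ ^ 2 + η ^ 2) := by nlinarith [sq_nonneg η, sq_nonneg σ]
  calc σ ^ (1 - p) / (σ ^ 2 * (σ ^ 2 + η ^ 2)) ≤ σ / σ ^ 4 :=
        div_le_div₀ hσ0.le hnum (by positivity) hden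
    _ = σ ^ (-3 : ℝ) := by
        rw [rpow_neg hσ0.le, show (3 : ℝ) = (3 : ℕ) by norm_num, rpow_natCast]
        field_simp

lemma integrableOn_Ioi_rpow_one_sub_div {p η : ℝ} (hp : 0 ≤ p) :
    IntegrableOn (fun σ : ℝ => σ ^ (1 - p) / (σ ^ 2 * (σ ^ 2 + η ^ 2))) (Ioi 1) := by
  have hcont : ContinuousOn (fun σ : ℝ => σ ^ (1 - p) / (σ ^ 2 * (σ ^ 2 + η ^ 2))) (Ioi 1) := by
    refine ContinuousOn.div ?_ (by fun_prop) fun σ (hσ : 1 < σ) => by positivity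
    exact continuousOn_id.rpow_const fun σ (hσ : 1 < σ) => Or.inl (by simp only [id_eq]; linarith)
  refine Integrable.mono' (integrableOn_Ioi_rpow_of_lt (by norm_num : (-3 : ℝ) < -1) one_pos)
    (hcont.aestronglyMeasurable measurableSet_Ioi) ?_
  filter_upwards [ae_restrict_mem measurableSet_Ioi] with σ (hσ : 1 < σ)
  have hσ0 : 0 < σ := by linarith
  rw [norm_of_nonneg (by positivity)]
  exact rpow_one_sub_div_le_rpow_neg_three hσ.le hp

lemma integral_Ioi_rpow_one_sub_div_le {p η : ℝ} (hp : 0 ≤ p) :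
    ∫ σ in Ioi (1 : ℝ), σ ^ (1 - p) / (σ ^ 2 * (σ ^ 2 + η ^ 2)) ≤ 1 / 2 := by
  calc ∫ σ in Ioi (1 : ℝ), σ ^ (1 - p) / (σ ^ 2 * (σ ^ 2 + η ^ 2))
      ≤ ∫ σ in Ioi (1 : ℝ), σ ^ (-3 : ℝ) :=
        setIntegral_mono_on (integrableOn_Ioi_rpow_one_sub_div hp)
          (integrableOn_Ioi_rpow_of_lt (by norm_num) one_pos) measurableSet_Ioi
          fun σ hσ => rpow_one_sub_div_le_rpow_neg_three (le_of_lt hσ) hp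
    _ = 1 / 2 := by
        rw [integral_Ioi_rpow_of_lt (by norm_num) one_pos]
        norm_num

lemma div_two_le_rpow_one_sub {σ p : ℝ} (hσ : 0 < σ) (h : σ ^ p ≤ 2) :
    σ / 2 ≤ σ ^ (1 - p) := by
  rw [rpow_sub hσ, rpow_one]
  exact div_le_div_of_nonneg_left hσ.le (by positivity) h

lemma sq_add_sq_mul_sq_add_mul_sq_le {σ α : ℝ} (hσ : 1 ≤ σ) :
    (σ ^ 2 + α ^ 2) * (σ ^ 2 + α ^ 2 * σ ^ 2) ≤ (1 + α ^ 2) ^ 2 * σ ^ 4 := by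
  have hσsq : 1 ≤ σ ^ 2 := one_le_pow₀ hσ
  have h : σ ^ 2 + α ^ 2 ≤ (1 + α ^ 2) * σ ^ 2 := by
    nlinarith [mul_le_mul_of_nonneg_left hσsq (sq_nonneg α)]
  calc (σ ^ 2 + α ^ 2) * (σ ^ 2 + α ^ 2 * σ ^ 2)
      = (σ ^ 2 + α ^ 2) * ((1 + α ^ 2) * σ ^ 2) := by ring
    _ ≤ ((1 + α ^ 2) * σ ^ 2) * ((1 + α ^ 2) * σ ^ 2) := by gcongr
    _ = (1 + α ^ 2) ^ 2 * σ ^ 4 := by ring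

lemma inv_sub_two_div_sq_le {σ : ℝ} (hσ : 0 < σ) : σ⁻¹ - 2 / σ ^ 2 ≤ (σ - 1) ^ 2 / σ ^ 3 := by
  have h : (σ - 1) ^ 2 / σ ^ 3 - (σ⁻¹ - 2 / σ ^ 2) = 1 / σ ^ 3 := by
    field_simp
    ring
  have : 0 < 1 / σ ^ 3 := by positivity
  linarith

lemma inv_sub_two_div_sq_le_integrand {σ p α : ℝ} (hσ : 1 ≤ σ) (hσp : σ ^ p ≤ 2) :
    α ^ 2 / (2 * (1 + α ^ 2) ^ 2) * (σ⁻¹ - 2 / σ ^ 2) ≤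
      σ ^ (1 - p) * (α ^ 2 * (σ - 1) ^ 2) / ((σ ^ 2 + α ^ 2) * (σ ^ 2 + α ^ 2 * σ ^ 2)) := by
  have hσ0 : 0 < σ := by linarith
  calc α ^ 2 / (2 * (1 + α ^ 2) ^ 2) * (σ⁻¹ - 2 / σ ^ 2)
      ≤ α ^ 2 / (2 * (1 + α ^ 2) ^ 2) * ((σ - 1) ^ 2 / σ ^ 3) := by
        gcongr
        exact inv_sub_two_div_sq_le hσ0
    _ = σ / 2 * (α ^ 2 * (σ - 1) ^ 2) / ((1 + α ^ 2) ^ 2 * σ ^ 4) := by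
        field_simp
    _ ≤ σ ^ (1 - p) * (α ^ 2 * (σ - 1) ^ 2) / ((σ ^ 2 + α ^ 2) * (σ ^ 2 + α ^ 2 * σ ^ 2)) := by
        refine div_le_div₀ (by positivity) ?_ (by positivity) (sq_add_sq_mul_sq_add_mul_sq_le hσ)
        gcongr
        exact div_two_le_rpow_one_sub hσ0 hσp

lemma integral_inv_sub_two_div_sq {a b : ℝ} (ha : 0 < a) (hb : 0 < b) :
    ∫ σ in a..b, (σ⁻¹ - 2 / σ ^ 2) = log b + 2 / b - (log a + 2 / a) := by
  have hpos : ∀ x ∈ uIcc a b, 0 < x := fun x hx =>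
    lt_of_lt_of_le (lt_min ha hb) hx.1
  refine intervalIntegral.integral_eq_sub_of_hasDerivAt (f := fun x => log x + 2 / x)
    (fun x hx => ?_) ?_
  · have hx := (hpos x hx).ne'
    convert (hasDerivAt_log hx).add ((hasDerivAt_inv hx).const_mul 2) using 1
    · ext; simp [div_eq_mul_inv]
    · ring
  · refine ContinuousOn.intervalIntegrable ?_
    exact ContinuousOn.sub (continuousOn_inv₀.mono fun x hx => (hpos x hx).ne')
      (continuousOn_const.div (by fun_prop) fun x hx => pow_ne_zero 2 (hpos x hx).ne')

lemma mul_log_sub_two_le_integral {M p α : ℝ} (hM : 1 ≤ M) (hp : 0 ≤ p) (hMp : M ^ p ≤ 2) :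
    α ^ 2 / (2 * (1 + α ^ 2) ^ 2) * (log M - 2) ≤
      ∫ σ in (1 : ℝ)..M,
        σ ^ (1 - p) * (α ^ 2 * (σ - 1) ^ 2) / ((σ ^ 2 + α ^ 2) * (σ ^ 2 + α ^ 2 * σ ^ 2)) := by
  have hpos : ∀ σ ∈ Icc 1 M, 0 < σ := fun σ hσ => by linarith [hσ.1]
  have hlow : IntervalIntegrable
      (fun σ : ℝ => α ^ 2 / (2 * (1 + α ^ 2) ^ 2) * (σ⁻¹ - 2 / σ ^ 2)) volume 1 M := by
    refine ContinuousOn.intervalIntegrable ?_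
    rw [uIcc_of_le hM]
    exact continuousOn_const.mul <| ContinuousOn.sub
      (continuousOn_inv₀.mono fun σ hσ => (hpos σ hσ).ne')
      (continuousOn_const.div (by fun_prop) fun σ hσ => pow_ne_zero 2 (hpos σ hσ).ne')
  have hf : IntervalIntegrable (fun σ : ℝ =>
      σ ^ (1 - p) * (α ^ 2 * (σ - 1) ^ 2) / ((σ ^ 2 + α ^ 2) * (σ ^ 2 + α ^ 2 * σ ^ 2)))
      volume 1 M := by
    refine ContinuousOn.intervalIntegrable ?_
    rw [uIcc_of_le hM]
    refine ContinuousOn.div (ContinuousOn.mul ?_ (by fun_prop)) (by fun_prop)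
      fun σ hσ => by have := hpos σ hσ; positivity
    exact continuousOn_id.rpow_const fun σ hσ => Or.inl (hpos σ hσ).ne'
  calc α ^ 2 / (2 * (1 + α ^ 2) ^ 2) * (log M - 2)
      ≤ α ^ 2 / (2 * (1 + α ^ 2) ^ 2) * (log M + 2 / M - (log 1 + 2 / 1)) := by
        have : 0 ≤ 2 / M := by positivity
        gcongr
        · linarith
        · norm_num
    _ = ∫ σ in (1 : ℝ)..M, α ^ 2 / (2 * (1 + α ^ 2) ^ 2) * (σ⁻¹ - 2 / σ ^ 2) := by
        rw [intervalIntegral.integral_const_mul, integral_inv_sub_two_div_sq one_pos (by linarith)]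
    _ ≤ _ := intervalIntegral.integral_mono_on hM hlow hf fun σ hσ =>
        inv_sub_two_div_sq_le_integrand hσ.1
          ((rpow_le_rpow (hpos σ hσ).le hσ.2 hp).trans hMp)

end BarrierCrossing

open BarrierCrossing in
/-- Key sufficient condition preventing barrier crossing: for every `α > 0`
there are `δ ∈ (0,1/4)` and `p̄ > 0` such that for all `p0 ∈ (0,p̄)`,
`η ∈ [0,2α]`, `x1 ∈ (0,2δ]`, the stated integral inequality holds. -/
theorem stmt_5 (α : ℝ) (hα : 0 < α) :
    ∃ δ ∈ Set.Ioo (0 : ℝ) (1/4), ∃ pbar > (0 : ℝ),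
      ∀ p0 ∈ Set.Ioo (0 : ℝ) pbar, ∀ η ∈ Set.Icc (0 : ℝ) (2 * α),
        ∀ x1 ∈ Set.Ioc (0 : ℝ) (2 * δ),
          (2 * α) ^ 2 * ∫ σ in Set.Ioi (1 : ℝ),
              σ ^ (1 - p0) / (σ ^ 2 * (σ ^ 2 + η ^ 2)) <
            ∫ σ in (1 : ℝ)..(1 / (2 * δ)),
              σ ^ (1 - p0) * (α ^ 2 * (σ - 1) ^ 2) /
                ((σ ^ 2 + α ^ 2) * (σ ^ 2 + α ^ 2 * σ ^ 2)) := by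
  set K := (1 + α ^ 2) ^ 2
  have hK : 0 < K := by positivity
  set L := 3 + 4 * K
  have hL : 0 < L := by positivity
  have hM : 2 < exp L := by linarith [add_one_le_exp L]
  refine ⟨1 / (2 * exp L), ⟨by positivity, ?_⟩, log 2 / L, by positivity, ?_⟩
  · rw [div_lt_div_iff₀ (by positivity) (by norm_num)]
    linarith
  rintro p0 ⟨hp0, hp0L⟩ η - - -
  have hMp : exp L ^ p0 ≤ 2 := by
    rw [← exp_mul, ← le_log_iff_exp_le two_pos]
    nlinarith [(lt_div_iff₀ hL).mp hp0L]
  rw [show 1 / (2 * (1 / (2 * exp L))) = exp L by field_simp]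
  calc (2 * α) ^ 2 * ∫ σ in Ioi (1 : ℝ), σ ^ (1 - p0) / (σ ^ 2 * (σ ^ 2 + η ^ 2))
      ≤ (2 * α) ^ 2 * (1 / 2) := by gcongr; exact integral_Ioi_rpow_one_sub_div_le hp0.le
    _ < 2 * α ^ 2 + α ^ 2 / (2 * K) := by nlinarith [div_pos (pow_pos hα 2) (mul_pos two_pos hK)]
    _ = α ^ 2 / (2 * K) * (log (exp L) - 2) := by rw [log_exp]; field_simp; ring
    _ ≤ _ := mul_log_sub_two_le_integral (by linarith) hp0.le hMp
end

section
/- Let α > 0 and p0 ∈ (0,1). Define 𝓕₀(η, x1, α, p0) = ∫₁^(1/x1) σ^(1−p0) · G(σ, α, η) dσ. Then for all η ∈ [0, 2α] and x1 ∈ (0, 1/2]: 𝓕₀(0, 1/2, α, p0) − 𝓕₀(η, x1, α, p0) ≤ (η²/2) · ∫₁^∞ σ^(1−p0) / (σ²·(σ² + η²)) dσ. -/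
/-!
On `[1, 2]` the comparison is pointwise: dropping `η` from the first term of `G` gains at most
`η² / (2σ²(σ² + η²))`, and adding `η ≥ 0` to `α(σ - 1) ≥ 0` in the second term only shrinks it.
Since `G ≥ 0` and `1/x1 ≥ 2`, `𝓕₀(η, x1)` dominates the integral over `[1, 2]`, and the bound over
`[1, 2]` extends to `[1, ∞)` because the majorant is nonnegative and integrable (`≤ σ^(-3-p0)`).
-/

open Set MeasureTheory

/-- The paper's `G(σ, α, η)`, with `σ` as last argument. -/
noncomputable def kernelG (α η σ : ℝ) : ℝ :=
  (1/2 : ℝ) * (1 / (σ ^ 2 + η ^ 2) - 1 / (σ ^ 2 + (α * (σ - 1) + η) ^ 2))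

section kernelG

variable {α η σ : ℝ}

lemma kernelG_nonneg (hα : 0 ≤ α) (hη : 0 ≤ η) (hσ : 1 ≤ σ) : 0 ≤ kernelG α η σ := by
  have hpos : 0 < σ ^ 2 + η ^ 2 := by positivity
  have hle : σ ^ 2 + η ^ 2 ≤ σ ^ 2 + (α * (σ - 1) + η) ^ 2 := by
    have : 0 ≤ α * (σ - 1) := mul_nonneg hα (by linarith)
    nlinarith
  have := one_div_le_one_div_of_le hpos hle
  unfold kernelG
  linarith

lemma kernelG_zero_sub_le (hα : 0 ≤ α) (hη : 0 ≤ η) (hσ : 1 ≤ σ) :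
    kernelG α 0 σ - kernelG α η σ ≤ η ^ 2 / 2 / (σ ^ 2 * (σ ^ 2 + η ^ 2)) := by
  have hA : 0 ≤ α * (σ - 1) := mul_nonneg hα (by linarith)
  have hσ2 : 0 < σ ^ 2 := by positivity
  have hsplit : 1 / σ ^ 2 - 1 / (σ ^ 2 + η ^ 2) = η ^ 2 / (σ ^ 2 * (σ ^ 2 + η ^ 2)) := by
    field_simp
    ring
  have hmono : 1 / (σ ^ 2 + (α * (σ - 1) + η) ^ 2) ≤ 1 / (σ ^ 2 + (α * (σ - 1)) ^ 2) :=
    one_div_le_one_div_of_le (by positivity) (by nlinarith)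
  unfold kernelG
  simp only [ne_eq, OfNat.ofNat_ne_zero, not_false_eq_true, zero_pow, add_zero]
  rw [div_right_comm, ← hsplit]
  linarith

lemma continuousOn_kernelG (α η : ℝ) : ContinuousOn (kernelG α η) (Ioi 0) := by
  unfold kernelG
  refine continuousOn_const.mul (ContinuousOn.sub ?_ ?_) <;>
    refine continuousOn_const.div (by fun_prop) fun σ (hσ : 0 < σ) => ?_ <;> positivity

end kernelG

lemma integrableOn_Ioi_rpow_div_sq_mul_sq_add_sq {s : ℝ} (hs : s < 3) (η : ℝ) :
    IntegrableOn (fun σ : ℝ => σ ^ s / (σ ^ 2 * (σ ^ 2 + η ^ 2))) (Ioi 1) := by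
  have hmaj : IntegrableOn (fun σ : ℝ => σ ^ (s - 4)) (Ioi 1) :=
    (integrableOn_Ioi_rpow_iff one_pos).2 (by linarith)
  refine hmaj.mono' ?_ ?_
  · refine ContinuousOn.aestronglyMeasurable ?_ measurableSet_Ioi
    refine ContinuousOn.div ?_ (by fun_prop) fun σ (hσ : 1 < σ) => by positivity
    exact continuousOn_id.rpow_const fun σ (hσ : 1 < σ) => Or.inl (by positivity)
  · filter_upwards [ae_restrict_mem measurableSet_Ioi] with σ (hσ : 1 < σ)
    have hσ0 : 0 < σ := by linarith
    rw [Real.norm_of_nonneg (by positivity), Real.rpow_sub hσ0, Real.rpow_ofNat]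
    gcongr
    nlinarith [sq_nonneg η, sq_nonneg σ]

lemma intervalIntegral_le_setIntegral_Ioi {f : ℝ → ℝ} {a b : ℝ} (hab : a ≤ b)
    (hf : IntegrableOn f (Ioi a)) (hnn : ∀ x ∈ Ioi a, 0 ≤ f x) :
    ∫ x in a..b, f x ≤ ∫ x in Ioi a, f x := by
  rw [intervalIntegral.integral_of_le hab]
  exact setIntegral_mono_set hf (ae_restrict_of_forall_mem measurableSet_Ioi hnn)
    Ioc_subset_Ioi_self.eventuallyLE

/-- Difference estimate for `𝓕₀`: for `η ∈ [0,2α]` and `x1 ∈ (0,1/2]`,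
`𝓕₀(0,1/2) − 𝓕₀(η,x1) ≤ (η²/2)·∫₁^∞ σ^(1−p0)/(σ²(σ²+η²)) dσ`. -/
theorem stmt_6 (α p0 : ℝ) (hα : 0 < α) (hp0 : p0 ∈ Set.Ioo (0 : ℝ) 1)
    (F0 : ℝ → ℝ → ℝ)
    (hF0 : ∀ η x1, F0 η x1 = ∫ σ in (1 : ℝ)..(1 / x1),
      σ ^ (1 - p0) *
        ((1/2 : ℝ) * (1 / (σ ^ 2 + η ^ 2) - 1 / (σ ^ 2 + (α * (σ - 1) + η) ^ 2)))) :
    ∀ η ∈ Set.Icc (0 : ℝ) (2 * α), ∀ x1 ∈ Set.Ioc (0 : ℝ) (1/2),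
      F0 0 (1/2) - F0 η x1 ≤
        (η ^ 2 / 2) * ∫ σ in Set.Ioi (1 : ℝ), σ ^ (1 - p0) / (σ ^ 2 * (σ ^ 2 + η ^ 2)) := by
  rintro η ⟨hη, -⟩ x1 ⟨hx1, hx1_le⟩
  set K : ℝ → ℝ → ℝ := fun e σ => σ ^ (1 - p0) * kernelG α e σ
  set h : ℝ → ℝ := fun σ => σ ^ (1 - p0) / (σ ^ 2 * (σ ^ 2 + η ^ 2))
  have hF : ∀ e x, F0 e x = ∫ σ in (1 : ℝ)..(1 / x), K e σ := hF0
  have hK_int : ∀ e b, 1 ≤ b → IntervalIntegrable (K e) volume 1 b := fun e b hb =>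
    ((continuousOn_id.rpow_const fun σ (hσ : 0 < σ) => Or.inl hσ.ne').mul
      (continuousOn_kernelG α e) |>.mono fun σ hσ => zero_lt_one.trans_le hσ.1)
      |>.intervalIntegrable_of_Icc hb
  have hh_int : IntegrableOn h (Ioi 1) :=
    integrableOn_Ioi_rpow_div_sq_mul_sq_add_sq (by linarith [hp0.1]) η
  have htwo : 2 ≤ 1 / x1 := by rw [le_div_iff₀ hx1]; linarith
  have hK_le : ∫ σ in (1 : ℝ)..2, K η σ ≤ F0 η x1 := by
    rw [hF]
    exact intervalIntegral.integral_mono_interval le_rfl one_le_two htwo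
      (ae_restrict_of_forall_mem measurableSet_Ioc fun σ hσ =>
        mul_nonneg (Real.rpow_nonneg (by linarith [hσ.1]) _) (kernelG_nonneg hα.le hη hσ.1.le))
      (hK_int η _ (by linarith))
  have hpt : ∀ σ ∈ Icc (1 : ℝ) 2, K 0 σ - K η σ ≤ η ^ 2 / 2 * h σ := fun σ hσ =>
    calc K 0 σ - K η σ = σ ^ (1 - p0) * (kernelG α 0 σ - kernelG α η σ) := (mul_sub _ _ _).symm
      _ ≤ σ ^ (1 - p0) * (η ^ 2 / 2 / (σ ^ 2 * (σ ^ 2 + η ^ 2))) :=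
        mul_le_mul_of_nonneg_left (kernelG_zero_sub_le hα.le hη hσ.1)
          (Real.rpow_nonneg (zero_le_one.trans hσ.1) _)
      _ = η ^ 2 / 2 * h σ := by simp only [h]; ring
  calc F0 0 (1/2) - F0 η x1 ≤ ∫ σ in (1 : ℝ)..2, K 0 σ - K η σ := by
        rw [intervalIntegral.integral_sub (hK_int 0 2 one_le_two) (hK_int η 2 one_le_two), hF 0,
          one_div_one_div]
        linarith
    _ ≤ ∫ σ in (1 : ℝ)..2, η ^ 2 / 2 * h σ :=
        intervalIntegral.integral_mono_on one_le_two
          ((hK_int 0 2 one_le_two).sub (hK_int η 2 one_le_two))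
          (((intervalIntegrable_iff_integrableOn_Ioc_of_le one_le_two).2
            (hh_int.mono_set Ioc_subset_Ioi_self)).const_mul _) hpt
    _ = η ^ 2 / 2 * ∫ σ in (1 : ℝ)..2, h σ := intervalIntegral.integral_const_mul _ _
    _ ≤ η ^ 2 / 2 * ∫ σ in Ioi 1, h σ := by
        gcongr
        exact intervalIntegral_le_setIntegral_Ioi one_le_two hh_int fun σ (hσ : 1 < σ) => by
          positivity
end

section
/- The pair ω(x) = x^(−1/2), ρ(x) = c (constant) with c = an appropriate positive constant is a steady solution of the one-dimensional system ω_t + u·ω_x = ρ/x, ρ_t + u·ρ_x = 0 with Biot–Savart law u(x) = −x·∫_x^∞ ω(y)/y dy. Specifically, with ω(x) = x^(−1/2) one has u(x) = −2·x^(1/2), and the steady equation u·ω_x = ρ/x holds with ρ ≡ c = 1 (since u(x)·ω'(x) = (−2x^{1/2})·(−(1/2)x^{−3/2}) = x^{−1}). -/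
open Set MeasureTheory

/-- The pair `ω(x) = x^(−1/2)`, `ρ ≡ 1` is a steady state of the 1D model:
`∫_x^∞ y^(−1/2)/y dy = 2x^(−1/2)`, hence `u(x) = −x·∫_x^∞ ω/y dy = −2x^(1/2)`,
`ω'(x) = −(1/2)x^(−3/2)` and `u(x)·ω'(x) = 1/x = ρ(x)/x`. -/
theorem stmt_10 :
    ∀ x : ℝ, 0 < x →
      (∫ y in Set.Ioi x, (y : ℝ) ^ (-(1:ℝ)/2) / y) = 2 * x ^ (-(1:ℝ)/2) ∧
      (-x * ∫ y in Set.Ioi x, (y : ℝ) ^ (-(1:ℝ)/2) / y) = -2 * x ^ ((1:ℝ)/2) ∧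
      HasDerivAt (fun z : ℝ => z ^ (-(1:ℝ)/2)) (-(1/2) * x ^ (-(3:ℝ)/2)) x ∧
      (-2 * x ^ ((1:ℝ)/2)) * (-(1/2) * x ^ (-(3:ℝ)/2)) = (1 : ℝ) / x := by
  intro x hx
  have hint : (∫ y in Set.Ioi x, (y : ℝ) ^ (-(1:ℝ)/2) / y) = 2 * x ^ (-(1:ℝ)/2) := by
    have h1 : (∫ y in Set.Ioi x, (y : ℝ) ^ (-(1:ℝ)/2) / y)
        = ∫ y in Set.Ioi x, (y : ℝ) ^ (-(3:ℝ)/2) := by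
      refine setIntegral_congr_fun measurableSet_Ioi (fun y hy => ?_)
      have hy0 : 0 < y := hx.trans hy
      rw [div_eq_mul_inv, ← Real.rpow_neg_one y, ← Real.rpow_add hy0]
      norm_num
    rw [h1, integral_Ioi_rpow_of_lt (by norm_num) hx]
    have : (-(3:ℝ)/2) + 1 = -(1:ℝ)/2 := by norm_num
    rw [this]
    ring
  refine ⟨hint, ?_, ?_, ?_⟩
  · rw [hint, show -x * (2 * x ^ (-(1:ℝ)/2)) = -2 * (x ^ (1:ℝ) * x ^ (-(1:ℝ)/2)) from by
      rw [Real.rpow_one]; ring, ← Real.rpow_add hx]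
    norm_num
  · have := Real.hasDerivAt_rpow_const (p := -(1:ℝ)/2) (Or.inl hx.ne')
    convert this using 1
    rw [show (-(1:ℝ)/2 - 1) = -(3:ℝ)/2 by norm_num]
    ring
  · rw [show (-2:ℝ) * x ^ ((1:ℝ)/2) * (-(1/2) * x ^ (-(3:ℝ)/2))
        = x ^ ((1:ℝ)/2) * x ^ (-(3:ℝ)/2) from by ring, ← Real.rpow_add hx,
      show ((1:ℝ)/2 + -(3:ℝ)/2) = (-1:ℝ) by norm_num, Real.rpow_neg_one, one_div]
end

section
/- Let ω : ℝ²₊ × [0,T] → [0,∞) satisfy supp ω(·,t) ⊆ [n1(t), n2] × [0,∞) with 0 < n1(t) ≤ n2, and u1((x1,x2), t) = −x1·∬_{(x1,x2)+S_α} (y1 y2/|y|⁴)·ω(y,t) dy. Then for any x2 ≥ 0, −u1((n1(t), x2), t) ≤ ‖ω(·,t)‖_∞ · n1(t) · log(n2/n1(t)). -/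
/-!
On the shifted sector `y₁ ≥ n₁` and `y₂ ≥ x₂`, and `ω` vanishes unless `y₁ ≤ n₂`, so the integral
is at most `Mω` times the integral of the kernel `y₁ y₂ / |y|⁴` over the half-strip
`[n₁, n₂] × [x₂, ∞)`. The inner integral in `y₂` equals `y₁ / (2 (y₁² + x₂²)) ≤ 1 / y₁`, and
integrating in `y₁` gives `log (n₂ / n₁)`.
-/

open Set MeasureTheory Filter Topology

noncomputable def biotSavartKernel (y : ℝ × ℝ) : ℝ := y.1 * y.2 / (y.1 ^ 2 + y.2 ^ 2) ^ 2

lemma measurable_biotSavartKernel : Measurable biotSavartKernel := by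
  unfold biotSavartKernel
  fun_prop

lemma biotSavartKernel_nonneg {y : ℝ × ℝ} (h₁ : 0 ≤ y.1) (h₂ : 0 ≤ y.2) :
    0 ≤ biotSavartKernel y := by
  unfold biotSavartKernel
  positivity

section InnerIntegral

variable {y₁ x₂ : ℝ}

lemma hasDerivAt_biotSavartKernel_primitive (hy₁ : y₁ ≠ 0) (y : ℝ) :
    HasDerivAt (fun y => -(y₁ / 2) * (y₁ ^ 2 + y ^ 2)⁻¹) (biotSavartKernel (y₁, y)) y := by
  have hne : y₁ ^ 2 + y ^ 2 ≠ 0 := by positivity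
  have hsq : HasDerivAt (fun y : ℝ => y₁ ^ 2 + y ^ 2) (2 * y) y := by
    simpa using (hasDerivAt_pow 2 y).const_add (y₁ ^ 2)
  refine ((hsq.inv hne).const_mul (-(y₁ / 2))).congr_deriv ?_
  simp only [biotSavartKernel]
  field_simp

lemma tendsto_biotSavartKernel_primitive :
    Tendsto (fun y : ℝ => -(y₁ / 2) * (y₁ ^ 2 + y ^ 2)⁻¹) atTop (𝓝 0) := by
  have hsq : Tendsto (fun y : ℝ => y₁ ^ 2 + y ^ 2) atTop atTop :=
    tendsto_atTop_add_const_left _ _ (tendsto_pow_atTop two_ne_zero)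
  simpa using hsq.inv_tendsto_atTop.const_mul (-(y₁ / 2))

lemma integrableOn_Ici_biotSavartKernel (hy₁ : 0 < y₁) (hx₂ : 0 ≤ x₂) :
    IntegrableOn (fun y₂ => biotSavartKernel (y₁, y₂)) (Ici x₂) :=
  (integrableOn_Ici_iff_integrableOn_Ioi (by simp)).2 <|
    integrableOn_Ioi_deriv_of_nonneg'
      (fun y _ => hasDerivAt_biotSavartKernel_primitive hy₁.ne' y)
      (fun _ hy => biotSavartKernel_nonneg hy₁.le (hx₂.trans (le_of_lt hy)))
      tendsto_biotSavartKernel_primitive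

lemma integral_Ici_biotSavartKernel (hy₁ : 0 < y₁) (hx₂ : 0 ≤ x₂) :
    ∫ y₂ in Ici x₂, biotSavartKernel (y₁, y₂) = y₁ / (2 * (y₁ ^ 2 + x₂ ^ 2)) := by
  rw [integral_Ici_eq_integral_Ioi, integral_Ioi_of_hasDerivAt_of_nonneg'
    (fun y _ => hasDerivAt_biotSavartKernel_primitive hy₁.ne' y)
    (fun _ hy => biotSavartKernel_nonneg hy₁.le (hx₂.trans (le_of_lt hy)))
    tendsto_biotSavartKernel_primitive]
  have hne : y₁ ^ 2 + x₂ ^ 2 ≠ 0 := by positivity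
  field_simp
  ring

end InnerIntegral

section HalfStrip

variable {n₁ n₂ x₂ : ℝ}

lemma integrableOn_Icc_div_two_mul_sq_add_sq (hn₁ : 0 < n₁) :
    IntegrableOn (fun y₁ : ℝ => y₁ / (2 * (y₁ ^ 2 + x₂ ^ 2))) (Icc n₁ n₂) :=
  ContinuousOn.integrableOn_Icc <| continuousOn_id.div (by fun_prop) fun y₁ hy₁ => by
    have := hn₁.trans_le hy₁.1
    positivity

lemma integrableOn_biotSavartKernel_halfStrip (hn₁ : 0 < n₁) (hx₂ : 0 ≤ x₂) :
    IntegrableOn biotSavartKernel (Icc n₁ n₂ ×ˢ Ici x₂) := by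
  rw [IntegrableOn, Measure.volume_eq_prod, ← Measure.prod_restrict,
    integrable_prod_iff measurable_biotSavartKernel.aestronglyMeasurable]
  constructor
  · filter_upwards [ae_restrict_mem measurableSet_Icc] with y₁ hy₁
    exact integrableOn_Ici_biotSavartKernel (hn₁.trans_le hy₁.1) hx₂
  · refine (integrableOn_Icc_div_two_mul_sq_add_sq (x₂ := x₂) hn₁).congr_fun
      (fun y₁ hy₁ => ?_) measurableSet_Icc
    have hy₁ : 0 < y₁ := hn₁.trans_le hy₁.1
    dsimp only
    rw [← integral_Ici_biotSavartKernel hy₁ hx₂]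
    refine setIntegral_congr_fun measurableSet_Ici fun y₂ hy₂ => ?_
    exact (Real.norm_of_nonneg
      (biotSavartKernel_nonneg (y := (y₁, y₂)) hy₁.le (hx₂.trans hy₂))).symm

lemma setIntegral_biotSavartKernel_halfStrip_le (hn₁ : 0 < n₁) (hn₁₂ : n₁ ≤ n₂) (hx₂ : 0 ≤ x₂) :
    ∫ y in Icc n₁ n₂ ×ˢ Ici x₂, biotSavartKernel y ≤ Real.log (n₂ / n₁) := by
  have hint := integrableOn_biotSavartKernel_halfStrip (n₂ := n₂) hn₁ hx₂
  rw [Measure.volume_eq_prod] at hint ⊢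
  rw [setIntegral_prod _ hint,
    setIntegral_congr_fun measurableSet_Icc fun y₁ hy₁ =>
      integral_Ici_biotSavartKernel (hn₁.trans_le hy₁.1) hx₂]
  have hpos : ∀ y₁ ∈ Icc n₁ n₂, 0 < y₁ := fun y₁ hy₁ => hn₁.trans_le hy₁.1
  calc ∫ y₁ in Icc n₁ n₂, y₁ / (2 * (y₁ ^ 2 + x₂ ^ 2))
      ≤ ∫ y₁ in Icc n₁ n₂, y₁⁻¹ :=
        setIntegral_mono_on (integrableOn_Icc_div_two_mul_sq_add_sq hn₁)
          (continuousOn_inv₀.mono fun y₁ hy₁ => (hpos y₁ hy₁).ne').integrableOn_Icc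
          measurableSet_Icc fun y₁ hy₁ => by
            have := hpos y₁ hy₁
            rw [div_le_iff₀ (by positivity)]
            field_simp
            nlinarith [sq_nonneg x₂]
    _ = Real.log (n₂ / n₁) := by
      rw [integral_Icc_eq_integral_Ioc, ← intervalIntegral.integral_of_le hn₁₂,
        integral_inv_of_pos hn₁ (hn₁.trans_le hn₁₂)]

end HalfStrip

section Domination

variable {X : Type*} [MeasurableSpace X] {μ : Measure X} {s t : Set X}

lemma setIntegral_le_setIntegral_of_le_of_nonneg {f g : X → ℝ} (hs : MeasurableSet s)
    (hg : IntegrableOn g s μ) (hg₀ : ∀ x ∈ s, 0 ≤ g x) (hfg : ∀ x ∈ s, f x ≤ g x) :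
    ∫ x in s, f x ∂μ ≤ ∫ x in s, g x ∂μ := by
  by_cases hf : IntegrableOn f s μ
  · exact setIntegral_mono_on hf hg hs hfg
  · rw [integral_undef hf]
    exact setIntegral_nonneg hs hg₀

lemma setIntegral_mul_le_mul_setIntegral_of_support_subset {k ω : X → ℝ} {M : ℝ}
    (hs : MeasurableSet s) (ht : MeasurableSet t) (hk : IntegrableOn k t μ)
    (hk₀ : ∀ x ∈ t, 0 ≤ k x) (hM : 0 ≤ M) (hω : ∀ x, ω x ≤ M)
    (hst : ∀ x ∈ s, ω x ≠ 0 → x ∈ t) :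
    ∫ x in s, k x * ω x ∂μ ≤ M * ∫ x in t, k x ∂μ := by
  have hMk : Integrable (t.indicator fun x => M * k x) μ :=
    IntegrableOn.integrable_indicator (hk.const_mul M) ht
  have hMk₀ : 0 ≤ t.indicator fun x => M * k x :=
    indicator_nonneg fun x hx => mul_nonneg hM (hk₀ x hx)
  calc ∫ x in s, k x * ω x ∂μ ≤ ∫ x in s, t.indicator (fun x => M * k x) x ∂μ := by
        refine setIntegral_le_setIntegral_of_le_of_nonneg hs hMk.integrableOn
          (fun x _ => hMk₀ x) fun x hx => ?_
        by_cases hωx : ω x = 0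
        · simpa [hωx] using hMk₀ x
        · have hxt := hst x hx hωx
          rw [indicator_of_mem hxt, mul_comm M]
          exact mul_le_mul_of_nonneg_left (hω x) (hk₀ x hxt)
    _ ≤ ∫ x, t.indicator (fun x => M * k x) x ∂μ :=
        setIntegral_le_integral hMk (Eventually.of_forall hMk₀)
    _ = M * ∫ x in t, k x ∂μ := by rw [integral_indicator ht, integral_const_mul]

end Domination

theorem stmt_11_general (α n1 n2 Mω : ℝ) (hn1 : 0 < n1) (hn12 : n1 ≤ n2)
    (ω : ℝ × ℝ → ℝ)
    (hbd : ∀ y, ω y ≤ Mω)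
    (hsupp : ∀ y : ℝ × ℝ, ω y ≠ 0 → y ∈ Set.Icc n1 n2 ×ˢ Set.Ici (0 : ℝ)) :
    ∀ x2 : ℝ, 0 ≤ x2 →
      n1 * ∫ y in {z : ℝ × ℝ | 0 ≤ z.1 - n1 ∧ 0 ≤ z.2 - x2 ∧ z.2 - x2 ≤ α * (z.1 - n1)},
          (y.1 * y.2 / (y.1 ^ 2 + y.2 ^ 2) ^ 2) * ω y ≤
        Mω * n1 * Real.log (n2 / n1) := by
  intro x2 hx2
  have hω₀ : ω (0, 0) = 0 := by
    by_contra h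
    exact hn1.not_ge (hsupp _ h).1.1
  have hMω : 0 ≤ Mω := hω₀ ▸ hbd (0, 0)
  have hsector : MeasurableSet
      {z : ℝ × ℝ | 0 ≤ z.1 - n1 ∧ 0 ≤ z.2 - x2 ∧ z.2 - x2 ≤ α * (z.1 - n1)} := by
    measurability
  have hdom := setIntegral_mul_le_mul_setIntegral_of_support_subset (μ := volume) (ω := ω)
    hsector (measurableSet_Icc.prod measurableSet_Ici)
    (integrableOn_biotSavartKernel_halfStrip (n₂ := n2) hn1 hx2)
    (fun y hy => biotSavartKernel_nonneg (hn1.le.trans hy.1.1) (hx2.trans hy.2)) hMω hbd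
    fun y hy hωy => ⟨(hsupp y hωy).1, show x2 ≤ y.2 by linarith [hy.2.1]⟩
  calc _ ≤ n1 * (Mω * Real.log (n2 / n1)) := mul_le_mul_of_nonneg_left
        (hdom.trans (mul_le_mul_of_nonneg_left
          (setIntegral_biotSavartKernel_halfStrip_le hn1 hn12 hx2) hMω)) hn1.le
    _ = Mω * n1 * Real.log (n2 / n1) := by ring

/-- Velocity bound at the left edge of the support:
`−u1((n1,x2),t) ≤ ‖ω‖_∞ · n1 · log(n2/n1)` when `ω ≥ 0` is bounded by `Mω`
and supported in `[n1,n2]×[0,∞)`. -/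
theorem stmt_11 (α n1 n2 Mω : ℝ) (hα : 0 < α) (hn1 : 0 < n1) (hn12 : n1 ≤ n2)
    (ω : ℝ × ℝ → ℝ)
    (hpos : ∀ y, 0 ≤ ω y) (hbd : ∀ y, ω y ≤ Mω)
    (hsupp : ∀ y : ℝ × ℝ, ω y ≠ 0 → y ∈ Set.Icc n1 n2 ×ˢ Set.Ici (0 : ℝ)) :
    ∀ x2 : ℝ, 0 ≤ x2 →
      n1 * ∫ y in {z : ℝ × ℝ | 0 ≤ z.1 - n1 ∧ 0 ≤ z.2 - x2 ∧ z.2 - x2 ≤ α * (z.1 - n1)},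
          (y.1 * y.2 / (y.1 ^ 2 + y.2 ^ 2) ^ 2) * ω y ≤
        Mω * n1 * Real.log (n2 / n1) :=
  stmt_11_general α n1 n2 Mω hn1 hn12 ω hbd hsupp
end
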